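/- The minimum of ½·∫_{-1}^{1} v(t)² dt over all real polynomials v of degree at most p satisfying v(1) = 1 equals 1/(p+1)². -/

import Mathlib

/-!
Expand `v = ∑ cᵢ Pᵢ` in the Legendre polynomials `Pᵢ` given by Rodrigues' formula. Then
`v(1) = ∑ cᵢ` and, by orthogonality, `½ ∫ v² = ∑ cᵢ² / (2i + 1)`, so Sedrakyan's form of
Cauchy–Schwarz gives `½ ∫ v² ≥ (∑ cᵢ)² / ∑ (2i + 1) = 1 / (p + 1)²`, with equality for
`cᵢ ∝ 2i + 1`. Orthogonality and `∫ Pₙ² = 2 / (2n + 1)` come from integrating `∫ q Pₙ` by parts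
`n` times: the boundary terms vanish because `±1` are `n`-fold roots of `(X² - 1)ⁿ`, which leaves
a multiple of `∫ (1 - x²)ⁿ`, computed by a reduction formula.
-/

open Polynomial intervalIntegral Finset
open scoped Nat

lemma iterate_derivative_eq_C_of_natDegree_le {R : Type*} [Semiring R] {q : R[X]} {n : ℕ}
    (hq : q.natDegree ≤ n) : derivative^[n] q = C (n ! * q.coeff n) := by
  have hdeg := natDegree_iterate_derivative q n
  rw [eq_C_of_natDegree_eq_zero (p := derivative^[n] q) (by omega), coeff_iterate_derivative,
    zero_add, Nat.descFactorial_self, nsmul_eq_mul]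

section XSqSubOnePow

variable {R : Type*} [CommRing R]

lemma monic_X_sq_sub_one_pow (n : ℕ) :
    ((X ^ 2 - 1) ^ n : R[X]).Monic := by
  simpa using ((monic_X_pow_sub_C (1 : R) two_ne_zero).pow n)

lemma natDegree_X_sq_sub_one_pow [Nontrivial R] (n : ℕ) :
    ((X ^ 2 - 1) ^ n : R[X]).natDegree = 2 * n := by
  rw [← C_1, (monic_X_pow_sub_C (1 : R) two_ne_zero).natDegree_pow, natDegree_X_pow_sub_C,
    mul_comm]

lemma eval_iterate_derivative_eq_factorial_mul_coeff_taylor (f : R[X]) (r : R) (j : ℕ) :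
    (derivative^[j] f).eval r = j ! * (taylor r f).coeff j := by
  rw [taylor_coeff, ← factorial_smul_hasseDeriv]
  simp [nsmul_eq_mul]

lemma taylor_X_sq_sub_one_pow {a : R} (ha : a ^ 2 = 1) (n : ℕ) :
    taylor a ((X ^ 2 - 1) ^ n : R[X]) = X ^ n * (X + C (2 * a)) ^ n := by
  rw [taylor_pow, map_sub, taylor_X_pow, taylor_one, C_1, ← mul_pow]
  have h1 : (1 : R[X]) = C a ^ 2 := by rw [← C_pow, ha, C_1]
  rw [h1, C_mul, C_ofNat]
  ring

lemma isRoot_iterate_derivative_X_sq_sub_one_pow {a : R} (ha : a ^ 2 = 1) {n j : ℕ}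
    (hj : j < n) : (derivative^[j] ((X ^ 2 - 1) ^ n : R[X])).IsRoot a := by
  rw [IsRoot, eval_iterate_derivative_eq_factorial_mul_coeff_taylor, taylor_X_sq_sub_one_pow ha,
    coeff_X_pow_mul', if_neg (by omega), mul_zero]

lemma eval_one_iterate_derivative_X_sq_sub_one_pow (n : ℕ) :
    (derivative^[n] ((X ^ 2 - 1) ^ n : R[X])).eval 1 = n ! * 2 ^ n := by
  rw [eval_iterate_derivative_eq_factorial_mul_coeff_taylor, taylor_X_sq_sub_one_pow (one_pow 2),
    coeff_X_pow_mul', if_pos le_rfl, Nat.sub_self, coeff_zero_eq_eval_zero]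
  simp

end XSqSubOnePow

section IntegrationByParts

variable {a b : ℝ}

lemma integral_mul_derivative_eval (q f : ℝ[X]) :
    ∫ x in a..b, q.eval x * (derivative f).eval x
      = q.eval b * f.eval b - q.eval a * f.eval a
        - ∫ x in a..b, (derivative q).eval x * f.eval x :=
  intervalIntegral.integral_mul_deriv_eq_deriv_mul (fun x _ => q.hasDerivAt x)
    (fun x _ => f.hasDerivAt x) ((derivative q).continuous.intervalIntegrable _ _)
    ((derivative f).continuous.intervalIntegrable _ _)

lemma integral_mul_iterate_derivative_eval {g : ℝ[X]} {n : ℕ}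
    (ha : ∀ j < n, (derivative^[j] g).IsRoot a) (hb : ∀ j < n, (derivative^[j] g).IsRoot b)
    (q : ℝ[X]) :
    ∫ x in a..b, q.eval x * (derivative^[n] g).eval x
      = (-1) ^ n * ∫ x in a..b, (derivative^[n] q).eval x * g.eval x := by
  induction n generalizing q with
  | zero => simp
  | succ n ih =>
    rw [Function.iterate_succ_apply', integral_mul_derivative_eval,
      (ha n n.lt_succ_self).eq_zero, (hb n n.lt_succ_self).eq_zero,
      ih (fun j hj => ha j (hj.trans n.lt_succ_self)) (fun j hj => hb j (hj.trans n.lt_succ_self)),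
      Function.iterate_succ_apply]
    ring

end IntegrationByParts

lemma integral_one_sub_sq_pow_succ (n : ℕ) :
    (2 * n + 3 : ℝ) * ∫ x in (-1 : ℝ)..1, (1 - x ^ 2) ^ (n + 1)
      = (2 * n + 2) * ∫ x in (-1 : ℝ)..1, (1 - x ^ 2) ^ n := by
  have hderiv (x : ℝ) : HasDerivAt (fun x : ℝ => x * (1 - x ^ 2) ^ (n + 1))
      ((2 * n + 3) * (1 - x ^ 2) ^ (n + 1) - (2 * n + 2) * (1 - x ^ 2) ^ n) x := by
    refine ((hasDerivAt_id' x).fun_mul (((hasDerivAt_pow 2 x).const_sub 1).fun_pow (n + 1))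
      ).congr_deriv ?_
    simp only [Nat.add_sub_cancel]
    push_cast
    ring
  have hint := integral_eq_sub_of_hasDerivAt (fun x _ => hderiv x)
    (Continuous.intervalIntegrable (by fun_prop) (-1 : ℝ) 1)
  rw [integral_sub (Continuous.intervalIntegrable (by fun_prop) _ _)
    (Continuous.intervalIntegrable (by fun_prop) _ _), integral_const_mul,
    integral_const_mul] at hint
  norm_num at hint
  linarith

lemma integral_one_sub_sq_pow (n : ℕ) :
    ∫ x in (-1 : ℝ)..1, (1 - x ^ 2) ^ n
      = (2 : ℝ) ^ (2 * n + 1) / ((2 * n + 1) * n.centralBinom) := by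
  induction n with
  | zero => norm_num
  | succ n ih =>
    have hrec := integral_one_sub_sq_pow_succ n
    rw [ih] at hrec
    have hbinom :
        ((n + 1 : ℕ) : ℝ) * (n + 1).centralBinom = 2 * (2 * n + 1) * n.centralBinom := by
      exact_mod_cast Nat.succ_mul_centralBinom_succ n
    have : (0 : ℝ) < n.centralBinom := by exact_mod_cast n.centralBinom_pos
    have : (0 : ℝ) < (n + 1).centralBinom := by exact_mod_cast (n + 1).centralBinom_pos
    rw [eq_div_iff (by positivity)]
    field_simp at hrec
    push_cast at hbinom ⊢
    refine mul_left_cancel₀ (by positivity : (2 * n + 1 : ℝ) * n.centralBinom ≠ 0) ?_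
    linear_combination ((n + 1).centralBinom : ℝ) * hrec + 2 ^ (2 * n + 2) * hbinom

/-- Rodrigues' formula. -/
noncomputable def legendre (n : ℕ) : ℝ[X] :=
  C (1 / (2 ^ n * n ! : ℝ)) * derivative^[n] ((X ^ 2 - 1) ^ n)

lemma legendre_eval (n : ℕ) (x : ℝ) :
    (legendre n).eval x = (derivative^[n] ((X ^ 2 - 1) ^ n)).eval x / (2 ^ n * n !) := by
  rw [legendre, eval_mul, eval_C, one_div, inv_mul_eq_div]

lemma natDegree_legendre_le (n : ℕ) : (legendre n).natDegree ≤ n := by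
  refine (natDegree_C_mul_le _ _).trans ?_
  have := natDegree_iterate_derivative ((X ^ 2 - 1) ^ n : ℝ[X]) n
  rw [natDegree_X_sq_sub_one_pow] at this
  omega

lemma coeff_legendre_self (n : ℕ) : (legendre n).coeff n = n.centralBinom / 2 ^ n := by
  have hlead : ((X ^ 2 - 1) ^ n : ℝ[X]).coeff (n + n) = 1 := by
    rw [← two_mul, ← natDegree_X_sq_sub_one_pow (R := ℝ)]
    exact (monic_X_sq_sub_one_pow n).coeff_natDegree
  rw [legendre, coeff_C_mul, coeff_iterate_derivative, hlead, ← two_mul,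
    Nat.descFactorial_eq_factorial_mul_choose, Nat.centralBinom]
  have : (n ! : ℝ) ≠ 0 := by positivity
  field_simp
  ring

lemma degree_legendre (n : ℕ) : (legendre n).degree = n :=
  degree_eq_of_le_of_coeff_ne_zero
    (degree_le_natDegree.trans (by exact_mod_cast natDegree_legendre_le n))
    (by rw [coeff_legendre_self]; have := n.centralBinom_pos; positivity)

lemma legendre_eval_one (n : ℕ) : (legendre n).eval 1 = 1 := by
  rw [legendre_eval, eval_one_iterate_derivative_X_sq_sub_one_pow, mul_comm,
    div_self (by positivity)]

lemma integral_mul_legendre {n : ℕ} {q : ℝ[X]} (hq : q.natDegree ≤ n) :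
    ∫ x in (-1 : ℝ)..1, q.eval x * (legendre n).eval x
      = q.coeff n * 2 ^ (n + 1) / ((2 * n + 1) * n.centralBinom) := by
  have hroot (a : ℝ) (ha : a ^ 2 = 1) (j : ℕ) (hj : j < n) :=
    isRoot_iterate_derivative_X_sq_sub_one_pow ha hj
  simp_rw [legendre_eval, mul_div_assoc', integral_div,
    integral_mul_iterate_derivative_eval (hroot (-1) (by norm_num)) (hroot 1 (by norm_num)),
    iterate_derivative_eq_C_of_natDegree_le hq, eval_C, integral_const_mul]
  have hsign (x : ℝ) : (-1) ^ n * ((X ^ 2 - 1) ^ n : ℝ[X]).eval x = (1 - x ^ 2) ^ n := by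
    simp [← mul_pow]
  rw [← mul_assoc, mul_comm _ (n ! * _ : ℝ), mul_assoc, ← integral_const_mul]
  simp_rw [hsign, integral_one_sub_sq_pow]
  have : (n ! : ℝ) ≠ 0 := by positivity
  field_simp
  ring

lemma integral_legendre_mul_legendre (i j : ℕ) :
    ∫ x in (-1 : ℝ)..1, (legendre i).eval x * (legendre j).eval x
      = if i = j then (2 / (2 * i + 1) : ℝ) else 0 := by
  have horth {i j : ℕ} (hij : i < j) :
      ∫ x in (-1 : ℝ)..1, (legendre i).eval x * (legendre j).eval x = 0 := by
    rw [integral_mul_legendre ((natDegree_legendre_le i).trans hij.le),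
      coeff_eq_zero_of_natDegree_lt ((natDegree_legendre_le i).trans_lt hij), zero_mul, zero_div]
  rcases lt_trichotomy i j with hij | rfl | hij
  · rw [horth hij, if_neg hij.ne]
  · rw [integral_mul_legendre (natDegree_legendre_le i), coeff_legendre_self, if_pos rfl]
    have : (i.centralBinom : ℝ) ≠ 0 := by exact_mod_cast i.centralBinom_ne_zero
    field_simp
    ring
  · simp_rw [mul_comm (eval _ (legendre i)), horth hij, if_neg hij.ne']

lemma exists_eq_sum_range_legendre {p : ℕ} {v : ℝ[X]} (hv : v.natDegree ≤ p) :
    ∃ c : ℕ → ℝ, v = ∑ i ∈ range (p + 1), c i • legendre i := by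
  let S : Sequence ℝ := ⟨legendre, degree_legendre⟩
  have hspan := S.span_degreeLE (m := p) fun i _ => by
    simp [S, leadingCoeff, natDegree_eq_of_degree_eq_some (degree_legendre i), coeff_legendre_self,
      Nat.centralBinom_ne_zero]
  have himage : S '' Set.Iic p = ↑((range (p + 1)).image legendre) := by
    ext; simp [S]
  have hmem : v ∈ degreeLE ℝ p :=
    mem_degreeLE.mpr (degree_le_natDegree.trans (by exact_mod_cast hv))
  rw [← hspan, himage, Submodule.mem_span_finset] at hmem
  obtain ⟨f, -, hf⟩ := hmem
  refine ⟨f ∘ legendre, ?_⟩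
  rw [← hf, sum_image fun i _ j _ h => by
    simpa [degree_legendre] using congrArg degree h]
  rfl

lemma integral_sum_smul_mul {ι : Type*} (s : Finset ι) (c : ι → ℝ) (f : ι → ℝ[X]) (q : ℝ[X])
    (a b : ℝ) :
    ∫ x in a..b, (∑ i ∈ s, c i • f i).eval x * q.eval x
      = ∑ i ∈ s, c i * ∫ x in a..b, (f i).eval x * q.eval x := by
  simp_rw [eval_finsetSum, eval_smul, smul_eq_mul, sum_mul, mul_assoc]
  rw [integral_finsetSum fun i _ => (Continuous.intervalIntegrable (by fun_prop) _ _)]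
  simp_rw [integral_const_mul]

section LegendreExpansion

variable (s : Finset ℕ) (c : ℕ → ℝ)

lemma eval_one_sum_smul_legendre : (∑ i ∈ s, c i • legendre i).eval 1 = ∑ i ∈ s, c i := by
  simp [eval_finsetSum, legendre_eval_one]

lemma integral_sum_smul_legendre_sq :
    ∫ x in (-1 : ℝ)..1, (∑ i ∈ s, c i • legendre i).eval x ^ 2
      = 2 * ∑ i ∈ s, c i ^ 2 / (2 * i + 1) := by
  have hcoord (j : ℕ) (hj : j ∈ s) :
      ∫ x in (-1 : ℝ)..1, (legendre j).eval x * (∑ i ∈ s, c i • legendre i).eval x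
        = c j * (2 / (2 * j + 1)) := by
    simp_rw [mul_comm (eval _ (legendre j)), integral_sum_smul_mul,
      integral_legendre_mul_legendre, mul_ite, mul_zero, sum_ite_eq', if_pos hj]
  simp_rw [sq, integral_sum_smul_mul, mul_sum]
  rw [sum_congr rfl fun j hj => by rw [hcoord j hj]]
  refine sum_congr rfl fun i _ => ?_
  ring

end LegendreExpansion

lemma sum_range_two_mul_add_one (n : ℕ) : ∑ i ∈ range n, (2 * i + 1 : ℝ) = n ^ 2 := by
  induction n with
  | zero => simp
  | succ n ih =>
    rw [sum_range_succ, ih]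
    push_cast
    ring

/-- The minimum of `½ ∫_{-1}^{1} v(t)² dt` over polynomials `v` of degree at most `p`
with `v(1) = 1` equals `1/(p+1)²`. -/
theorem stmt_1 (p : ℕ) :
    IsLeast {I : ℝ | ∃ v : Polynomial ℝ, v.natDegree ≤ p ∧ v.eval 1 = 1 ∧
        I = (1 / 2) * ∫ t in Set.Ioo (-1 : ℝ) 1, (v.eval t) ^ 2}
      (1 / ((p : ℝ) + 1) ^ 2) := by
  have hodd : ∑ i ∈ range (p + 1), (2 * i + 1 : ℝ) = (p + 1) ^ 2 := by
    rw [sum_range_two_mul_add_one]; push_cast; ring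
  have hpos : (0 : ℝ) < (p + 1) ^ 2 := by positivity
  have hIoo (v : ℝ[X]) :
      ∫ t in Set.Ioo (-1 : ℝ) 1, v.eval t ^ 2 = ∫ t in (-1 : ℝ)..1, v.eval t ^ 2 := by
    rw [integral_of_le (by norm_num), MeasureTheory.integral_Ioc_eq_integral_Ioo]
  refine ⟨⟨∑ i ∈ range (p + 1), ((2 * i + 1) / (p + 1) ^ 2 : ℝ) • legendre i, ?_, ?_, ?_⟩, ?_⟩
  · refine natDegree_sum_le_of_forall_le _ _ fun i hi => (natDegree_smul_le _ _).trans ?_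
    exact (natDegree_legendre_le i).trans (Nat.lt_succ_iff.mp (mem_range.mp hi))
  · rw [eval_one_sum_smul_legendre, ← sum_div, hodd, div_self hpos.ne']
  · rw [hIoo, integral_sum_smul_legendre_sq]
    have (i : ℕ) :
        ((2 * i + 1) / (p + 1) ^ 2 : ℝ) ^ 2 / (2 * i + 1) = (2 * i + 1) / (p + 1) ^ 4 := by
      field_simp
    simp_rw [this, ← sum_div, hodd]
    field_simp
  · rintro _ ⟨v, hv, hv1, rfl⟩
    obtain ⟨c, rfl⟩ := exists_eq_sum_range_legendre hv
    rw [eval_one_sum_smul_legendre] at hv1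
    have hcs := sq_sum_div_le_sum_sq_div (range (p + 1)) c (g := fun i => (2 * i + 1 : ℝ))
      fun i _ => by positivity
    rw [hv1, hodd] at hcs
    rw [hIoo, integral_sum_smul_legendre_sq]
    linarith
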